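/- arXiv:math/9811118 — 2 statements merged into one kernel-verified Lean document; each statement's English description precedes it below -/
import Mathlib

section
/- Let α ∈ ℂ, β ∈ ℝ with β < Re α, and let u : (0,1] → ℂ be continuously differentiable with |x * u'(x) − α * u(x)| ≤ C * x^β for all x ∈ (0,1]. Then there is a constant C' such that |u(x)| ≤ C' * x^β for all x ∈ (0,1]. -/
/-!
Since `d/ds (s^{-α} u(s)) = s^{-α-1} (s u'(s) - α u(s))`, the weighted function `s^{-α} u(s)` has
derivative of size `O(s^{β - Re α - 1})`. Integrating this bound from `x` to `1` (in the form of
the mean value inequality against `s^{β - Re α}`) and using `β - Re α < 0` gives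
`|x^{-α} u(x)| ≤ |u(1)| + C x^{β - Re α} / (Re α - β)`, i.e. `|u(x)| = O(x^β)`.
-/

open Set

theorem norm_sub_le_sub_of_norm_deriv_le {E : Type*} [NormedAddCommGroup E] [NormedSpace ℝ E]
    {f f' : ℝ → E} {g g' : ℝ → ℝ} {a b : ℝ} (hab : a ≤ b)
    (hf : ∀ t ∈ Icc a b, HasDerivAt f (f' t) t) (hg : ∀ t ∈ Icc a b, HasDerivAt g (g' t) t)
    (bound : ∀ t ∈ Ico a b, ‖f' t‖ ≤ g' t) : ‖f b - f a‖ ≤ g b - g a :=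
  image_norm_le_of_norm_deriv_right_le_deriv_boundary' (f := fun t => f t - f a)
    (B := fun t => g t - g a)
    (fun t ht => ((hf t ht).continuousAt.sub continuousAt_const).continuousWithinAt)
    (fun t ht => ((hf t (Ico_subset_Icc_self ht)).sub_const _).hasDerivWithinAt)
    (by simp)
    (fun t ht => ((hg t ht).continuousAt.sub continuousAt_const).continuousWithinAt)
    (fun t ht => ((hg t (Ico_subset_Icc_self ht)).sub_const _).hasDerivWithinAt)
    bound (right_mem_Icc.2 hab)

theorem norm_sub_le_of_norm_deriv_le_mul_rpow {E : Type*} [NormedAddCommGroup E]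
    [NormedSpace ℝ E] {f f' : ℝ → E} {a b C γ : ℝ} (hγ : γ ≠ 0) (ha : 0 < a) (hab : a ≤ b)
    (hf : ∀ t ∈ Icc a b, HasDerivAt f (f' t) t) (bound : ∀ t ∈ Icc a b, ‖f' t‖ ≤ C * t ^ (γ - 1)) :
    ‖f b - f a‖ ≤ C / γ * (b ^ γ - a ^ γ) := by
  have hg : ∀ t ∈ Icc a b, HasDerivAt (fun t => C / γ * t ^ γ) (C * t ^ (γ - 1)) t := by
    intro t ht
    refine ((Real.hasDerivAt_rpow_const (Or.inl (ha.trans_le ht.1).ne')).const_mul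
      (C / γ)).congr_deriv ?_
    field_simp
  rw [mul_sub]
  exact norm_sub_le_sub_of_norm_deriv_le hab hf hg fun t ht => bound t (Ico_subset_Icc_self ht)

theorem hasDerivAt_ofReal_cpow_mul (c : ℂ) {u : ℝ → ℂ} {u' : ℂ} {s : ℝ} (hs : 0 < s)
    (hu : HasDerivAt u u' s) :
    HasDerivAt (fun t : ℝ => (t : ℂ) ^ c * u t) ((s : ℂ) ^ (c - 1) * (s * u' + c * u s)) s := by
  have hs' : (s : ℂ) ≠ 0 := by exact_mod_cast hs.ne'
  have hpow : HasDerivAt (fun t : ℝ => (t : ℂ) ^ c) (c * (s : ℂ) ^ (c - 1)) s := by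
    simpa using (Complex.hasStrictDerivAt_cpow_const (c := c)
      (Or.inl (by simpa using hs))).hasDerivAt.comp_ofReal
  refine (hpow.mul hu).congr_deriv ?_
  rw [Complex.cpow_sub _ _ hs', Complex.cpow_one]
  field_simp
  ring

theorem norm_ofReal_cpow_neg_mul_sub_le {α : ℂ} {β C a b : ℝ} {u u' : ℝ → ℂ} (hβ : β ≠ α.re)
    (ha : 0 < a) (hab : a ≤ b) (hderiv : ∀ t ∈ Icc a b, HasDerivAt u (u' t) t)
    (hbound : ∀ t ∈ Icc a b, ‖(t : ℂ) * u' t - α * u t‖ ≤ C * t ^ β) :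
    ‖(b : ℂ) ^ (-α) * u b - (a : ℂ) ^ (-α) * u a‖ ≤
      C / (β - α.re) * (b ^ (β - α.re) - a ^ (β - α.re)) := by
  refine norm_sub_le_of_norm_deriv_le_mul_rpow (sub_ne_zero.2 hβ) ha hab
    (fun t ht => hasDerivAt_ofReal_cpow_mul (-α) (ha.trans_le ht.1) (hderiv t ht)) fun t ht => ?_
  have ht₀ : 0 < t := ha.trans_le ht.1
  rw [norm_mul, Complex.norm_cpow_eq_rpow_re_of_pos ht₀, neg_mul, ← sub_eq_add_neg,
    show β - α.re - 1 = (-α - 1).re + β by simp; ring, Real.rpow_add ht₀, mul_left_comm]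
  exact mul_le_mul_of_nonneg_left (hbound t ht) (Real.rpow_nonneg ht₀.le _)

theorem stmt3_general (α : ℂ) (β C : ℝ) (hβ : β < α.re) (u u' : ℝ → ℂ)
    (hderiv : ∀ x ∈ Set.Ioc (0 : ℝ) 1, HasDerivAt u (u' x) x)
    (hbound : ∀ x ∈ Set.Ioc (0 : ℝ) 1, ‖(x : ℂ) * u' x - α * u x‖ ≤ C * x ^ β) :
    ∃ C' : ℝ, ∀ x ∈ Set.Ioc (0 : ℝ) 1, ‖u x‖ ≤ C' * x ^ β := by
  have hC : 0 ≤ C := (norm_nonneg _).trans (by simpa using hbound 1 ⟨one_pos, le_rfl⟩)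
  refine ⟨‖u 1‖ - C / (β - α.re), fun x hx => ?_⟩
  have hIcc : Icc x 1 ⊆ Ioc 0 1 := fun t ht => ⟨hx.1.trans_le ht.1, ht.2⟩
  have hdiff := norm_ofReal_cpow_neg_mul_sub_le hβ.ne hx.1 hx.2 (fun t ht => hderiv t (hIcc ht))
    fun t ht => hbound t (hIcc ht)
  set γ := β - α.re
  have hγ : γ < 0 := sub_neg.2 hβ
  have hxγ : 1 ≤ x ^ γ := Real.one_le_rpow_of_pos_of_le_one_of_nonpos hx.1 hx.2 hγ.le
  have hCγ : C / γ ≤ 0 := div_nonpos_of_nonneg_of_nonpos hC hγ.le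
  have hx' : x ^ (-α.re) * ‖u x‖ ≤ (‖u 1‖ - C / γ) * x ^ γ := by
    have htri := norm_le_norm_add_norm_sub (1 ^ (-α) * u 1) ((x : ℂ) ^ (-α) * u x)
    simp only [Complex.ofReal_one, Complex.one_cpow, one_mul, Real.one_rpow] at htri hdiff
    rw [norm_mul, Complex.norm_cpow_eq_rpow_re_of_pos hx.1, Complex.neg_re] at htri
    nlinarith [mul_nonneg (norm_nonneg (u 1)) (sub_nonneg.2 hxγ)]
  rw [Real.rpow_neg hx.1.le, inv_mul_le_iff₀ (Real.rpow_pos_of_pos hx.1 _)] at hx'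
  calc ‖u x‖ ≤ x ^ α.re * ((‖u 1‖ - C / γ) * x ^ γ) := hx'
    _ = (‖u 1‖ - C / γ) * x ^ β := by
      rw [mul_left_comm, ← Real.rpow_add hx.1]; simp [γ]

/-- If `β < Re α` and `|x u'(x) − α u(x)| ≤ C x^β` on `(0,1]` for a `C¹` function `u`,
then `|u(x)| ≤ C' x^β` on `(0,1]` for some constant `C'`. -/
theorem stmt3 (α : ℂ) (β C : ℝ) (hβ : β < α.re) (u u' : ℝ → ℂ)
    (hderiv : ∀ x ∈ Set.Ioc (0 : ℝ) 1, HasDerivAt u (u' x) x)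
    (hcont : ContinuousOn u' (Set.Ioc 0 1))
    (hbound : ∀ x ∈ Set.Ioc (0 : ℝ) 1, ‖(x : ℂ) * u' x - α * u x‖ ≤ C * x ^ β) :
    ∃ C' : ℝ, ∀ x ∈ Set.Ioc (0 : ℝ) 1, ‖u x‖ ≤ C' * x ^ β :=
  stmt3_general α β C hβ u u' hderiv hbound
end

section
/- Let k ≥ 1 and let u(x) be smooth on (0,1] such that for every M ∈ ℕ there exist a constant C_M with |∏_{j=0}^{M} (x∂_x − j) u(x)| ≤ C_M x^{M+1} on (0,1]. Then u has a full asymptotic expansion u(x) ~ Σ_{m=0}^{∞} a_m x^m as x → 0⁺, i.e. for every p there is C with |u(x) − Σ_{m=0}^{p−1} a_m x^m| ≤ C x^p. -/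
open Set Filter Topology

/-- The operator `x∂ₓ`. -/
noncomputable def xDxOp (f : ℝ → ℂ) : ℝ → ℂ := fun x => x * deriv f x

/-- The operator `x∂ₓ − j`. -/
noncomputable def Lop (j : ℕ) (f : ℝ → ℂ) : ℝ → ℂ := fun x => xDxOp f x - j * f x

/-- The product of operators `∏_{j=0}^{M} (x∂ₓ − j)`. -/
noncomputable def Qop : ℕ → (ℝ → ℂ) → ℝ → ℂ
  | 0, f => Lop 0 f
  | (M + 1), f => Lop (M + 1) (Qop M f)

lemma mvt_est (g g' : ℝ → ℂ) (C : ℝ) (hC : 0 ≤ C) (r : ℕ)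
    (hg : ∀ t ∈ Ioo (0:ℝ) 1, HasDerivAt g (g' t) t)
    (hb : ∀ t ∈ Ioo (0:ℝ) 1, ‖g' t‖ ≤ C * t ^ r)
    {x y : ℝ} (hx : x ∈ Ioo (0:ℝ) 1) (hy : y ∈ Ioo (0:ℝ) 1) (hxy : x ≤ y) :
    ‖g y - g x‖ ≤ C * y ^ (r + 1) := by
  have hIcc : Icc x y ⊆ Ioo (0:ℝ) 1 := fun t ht => ⟨lt_of_lt_of_le hx.1 ht.1, lt_of_le_of_lt ht.2 hy.2⟩
  set B : ℝ → ℝ := fun t => C / (r + 1) * (t ^ (r + 1) - x ^ (r + 1)) with hBdef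
  have hf : ContinuousOn (fun t => g t - g x) (Icc x y) := fun t ht =>
    ((hg t (hIcc ht)).continuousAt).continuousWithinAt.sub continuousWithinAt_const
  have hf' : ∀ t ∈ Ico x y, HasDerivWithinAt (fun t => g t - g x) (g' t) (Ici t) t := fun t ht =>
    ((hg t (hIcc (Ico_subset_Icc_self ht))).sub_const (g x)).hasDerivWithinAt
  have ha : ‖g x - g x‖ ≤ B x := by simp [hBdef]
  have hB : ∀ t : ℝ, HasDerivAt B (C * t ^ r) t := by
    intro t
    have h1 : HasDerivAt (fun t : ℝ => t ^ (r+1) - x ^ (r+1)) ((r+1) * t ^ r) t := by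
      simpa using ((hasDerivAt_pow (r+1) t).sub_const (x ^ (r+1)))
    have h2 := h1.const_mul (C / (r + 1))
    have : C / (r + 1) * ((r+1 : ℝ) * t ^ r) = C * t ^ r := by
      have : ((r:ℝ) + 1) ≠ 0 := by positivity
      field_simp
    rwa [this] at h2
  have bound : ∀ t ∈ Ico x y, ‖g' t‖ ≤ C * t ^ r := fun t ht =>
    hb t (hIcc (Ico_subset_Icc_self ht))
  have key := image_norm_le_of_norm_deriv_right_le_deriv_boundary hf hf' ha hB bound
  have h1 : ‖g y - g x‖ ≤ B y := key (right_mem_Icc.mpr hxy)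
  have h2 : B y ≤ C * y ^ (r + 1) := by
    have hy1 : (0:ℝ) ≤ y ^ (r+1) := pow_nonneg (le_of_lt (lt_of_lt_of_le hx.1 hxy)) _
    have hx1 : (0:ℝ) ≤ x ^ (r+1) := pow_nonneg hx.1.le _
    have hCd : C / (r+1) ≤ C := by
      apply div_le_self hC
      have : (0:ℝ) < r + 1 := by positivity
      linarith
    calc C / (r + 1) * (y ^ (r + 1) - x ^ (r + 1)) ≤ C / (r+1) * y ^ (r+1) := by
          apply mul_le_mul_of_nonneg_left (by linarith) (by positivity)
      _ ≤ C * y ^ (r+1) := mul_le_mul_of_nonneg_right hCd hy1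
  linarith

lemma lim_est (g g' : ℝ → ℂ) (C : ℝ) (hC : 0 ≤ C) (r : ℕ)
    (hg : ∀ t ∈ Ioo (0:ℝ) 1, HasDerivAt g (g' t) t)
    (hb : ∀ t ∈ Ioo (0:ℝ) 1, ‖g' t‖ ≤ C * t ^ r) :
    ∃ a : ℂ, ∀ x ∈ Ioo (0:ℝ) 1, ‖g x - a‖ ≤ C * x ^ (r + 1) := by
  set s : ℕ → ℂ := fun n => g (1 / (n + 2)) with hs
  have hmem : ∀ n : ℕ, (1 / ((n:ℝ) + 2)) ∈ Ioo (0:ℝ) 1 := by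
    intro n
    constructor
    · positivity
    · rw [div_lt_one (by positivity)]; linarith [Nat.cast_nonneg (α := ℝ) n]
  have hdist : ∀ n m N : ℕ, N ≤ n → N ≤ m →
      dist (s n) (s m) ≤ C * (1 / ((N:ℝ) + 2)) ^ (r + 1) := by
    intro n m N hn hm
    wlog h : (1 / ((m:ℝ) + 2)) ≤ (1 / ((n:ℝ) + 2)) generalizing n m
    · rw [dist_comm]
      exact this m n hm hn (le_of_not_ge h)
    rw [dist_eq_norm]
    have hstep := mvt_est g g' C hC r hg hb (hmem m) (hmem n) h
    refine hstep.trans ?_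
    apply mul_le_mul_of_nonneg_left _ hC
    apply pow_le_pow_left₀ (by positivity)
    apply div_le_div_of_nonneg_left (by norm_num) (by positivity)
    have : (N:ℝ) ≤ n := Nat.cast_le.mpr hn
    linarith
  have hcauchy : CauchySeq s := by
    apply cauchySeq_of_le_tendsto_0 (fun N : ℕ => C * (1 / ((N:ℝ) + 2)) ^ (r + 1)) hdist
    have h0 : Tendsto (fun N : ℕ => 1 / ((N:ℝ) + 2)) atTop (𝓝 0) := by
      simp only [one_div]
      exact Tendsto.comp tendsto_inv_atTop_zero
        (tendsto_atTop_add_const_right atTop 2 tendsto_natCast_atTop_atTop)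
    have := (h0.pow (r + 1)).const_mul C
    simpa using this
  obtain ⟨a, ha⟩ := cauchySeq_tendsto_of_complete hcauchy
  refine ⟨a, fun x hx => ?_⟩
  have hev : ∀ᶠ n in atTop, ‖g x - s n‖ ≤ C * x ^ (r + 1) := by
    have : ∀ᶠ n : ℕ in atTop, (1 / ((n:ℝ) + 2)) ≤ x := by
      obtain ⟨N, hN⟩ := exists_nat_gt (1 / x)
      filter_upwards [eventually_ge_atTop N] with n hn
      rw [div_le_iff₀ (by positivity)]
      rw [div_lt_iff₀ hx.1] at hN
      have : (N:ℝ) ≤ n := Nat.cast_le.mpr hn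
      nlinarith [hx.1]
    filter_upwards [this] with n hn
    exact mvt_est g g' C hC r hg hb (hmem n) hx hn
  have htend : Tendsto (fun n => ‖g x - s n‖) atTop (𝓝 ‖g x - a‖) :=
    ((tendsto_const_nhds.sub ha).norm)
  exact le_of_tendsto htend hev

lemma peel (W W' : ℝ → ℂ) (j M : ℕ) (hjM : j ≤ M) (C : ℝ) (hC : 0 ≤ C)
    (hW : ∀ x ∈ Ioo (0:ℝ) 1, HasDerivAt W (W' x) x)
    (hb : ∀ x ∈ Ioo (0:ℝ) 1, ‖(x:ℂ) * W' x - (j:ℂ) * W x‖ ≤ C * x ^ (M+1)) :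
    ∃ a : ℂ, ∀ x ∈ Ioo (0:ℝ) 1, ‖W x - a * (x:ℂ)^j‖ ≤ C * x ^ (M+1) := by
  set g : ℝ → ℂ := fun x => W x * ((x:ℂ))^(-(j:ℤ)) with hgdef
  set g' : ℝ → ℂ := fun x => ((x:ℂ))^(-(j:ℤ)-1) * ((x:ℂ) * W' x - (j:ℂ) * W x) with hg'def
  have hgd : ∀ x ∈ Ioo (0:ℝ) 1, HasDerivAt g (g' x) x := by
    intro x hx
    have hx0 : (x:ℂ) ≠ 0 := by
      simp only [ne_eq, Complex.ofReal_eq_zero]; exact ne_of_gt hx.1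
    have hz : HasDerivAt (fun y : ℝ => ((y:ℂ))^(-(j:ℤ))) ((-(j:ℤ)) * (x:ℂ)^(-(j:ℤ)-1)) x := by
      have := (hasDerivAt_zpow (-(j:ℤ)) (x:ℂ) (Or.inl hx0)).comp_ofReal
      convert this using 2
      push_cast
      ring
    have h := (hW x hx).fun_mul hz
    have e1 : (x:ℂ)^(-(j:ℤ)) = (x:ℂ)^(-(j:ℤ)-1) * (x:ℂ) := by
      rw [← zpow_add_one₀ hx0]
      congr 1
      ring
    refine HasDerivAt.congr_deriv h ?_
    rw [hg'def]
    push_cast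
    rw [e1]
    ring
  have hgb : ∀ x ∈ Ioo (0:ℝ) 1, ‖g' x‖ ≤ C * x ^ (M - j) := by
    intro x hx
    have hx0 : (0:ℝ) < x := hx.1
    rw [hg'def]
    rw [norm_mul, norm_zpow]
    have hnx : ‖(x:ℂ)‖ = x := by
      rw [Complex.norm_real, Real.norm_of_nonneg hx0.le]
    rw [hnx]
    have key : x ^ (-(j:ℤ)-1) * (C * x ^ (M+1)) = C * x ^ (M - j) := by
      rw [mul_comm, mul_assoc]
      congr 1
      rw [← zpow_natCast x (M+1), ← zpow_add₀ (ne_of_gt hx0), ← zpow_natCast x (M - j)]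
      congr 1
      omega
    calc x ^ (-(j:ℤ)-1) * ‖(x:ℂ) * W' x - (j:ℂ) * W x‖
        ≤ x ^ (-(j:ℤ)-1) * (C * x ^ (M+1)) := by
          apply mul_le_mul_of_nonneg_left (hb x hx) (le_of_lt (zpow_pos hx0 _))
      _ = C * x ^ (M - j) := key
  obtain ⟨a, ha⟩ := lim_est g g' C hC (M - j) hgd hgb
  refine ⟨a, fun x hx => ?_⟩
  have hx0 : (x:ℂ) ≠ 0 := by
    simp only [ne_eq, Complex.ofReal_eq_zero]; exact ne_of_gt hx.1
  have hWx : W x - a * (x:ℂ)^j = (g x - a) * (x:ℂ)^j := by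
    rw [hgdef, sub_mul, mul_assoc, ← zpow_natCast ((x:ℂ)) j, ← zpow_add₀ hx0]
    simp
  rw [hWx, norm_mul, norm_pow]
  have hnx : ‖(x:ℂ)‖ = x := by rw [Complex.norm_real, Real.norm_of_nonneg hx.1.le]
  rw [hnx]
  calc ‖g x - a‖ * x ^ j ≤ (C * x ^ (M - j + 1)) * x ^ j := by
        apply mul_le_mul_of_nonneg_right (ha x hx) (pow_nonneg hx.1.le _)
    _ = C * x ^ (M + 1) := by
        rw [mul_assoc, ← pow_add]
        congr 2
        omega

noncomputable def Qm : ℕ → (ℝ → ℂ) → ℝ → ℂ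
  | 0, f => f
  | (j + 1), f => Lop j (Qm j f)

lemma Qm_succ_eq_Qop (M : ℕ) (f : ℝ → ℂ) : Qm (M+1) f = Qop M f := by
  induction M with
  | zero => rfl
  | succ M ih => show Lop (M+1) (Qm (M+1) f) = Lop (M+1) (Qop M f); rw [ih]

lemma Qm_contDiffOn (u : ℝ → ℂ) (hu : ContDiffOn ℝ (⊤ : ℕ∞) u (Ioo 0 1)) (j : ℕ) :
    ContDiffOn ℝ (⊤ : ℕ∞) (Qm j u) (Ioo 0 1) := by
  induction j with
  | zero => exact hu
  | succ j ih =>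
      show ContDiffOn ℝ (⊤ : ℕ∞) (fun x : ℝ => (x:ℂ) * deriv (Qm j u) x - (j:ℂ) * Qm j u x) (Ioo 0 1)
      apply ContDiffOn.sub
      · exact (Complex.ofRealCLM.contDiff.contDiffOn).mul (ih.deriv_of_isOpen isOpen_Ioo (by simp))
      · exact contDiffOn_const.mul ih

lemma main_expand (u : ℝ → ℂ) (hu : ContDiffOn ℝ (⊤ : ℕ∞) u (Ioo 0 1))
    (hbound : ∀ M : ℕ, ∃ C : ℝ, ∀ x ∈ Ioo (0:ℝ) 1, ‖Qop M u x‖ ≤ C * x ^ (M + 1)) (M : ℕ) :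
    ∃ c : ℕ → ℂ, ∃ C : ℝ, ∀ x ∈ Ioo (0:ℝ) 1,
      ‖u x - ∑ m ∈ Finset.range (M+1), c m * (x:ℂ) ^ m‖ ≤ C * x ^ (M+1) := by
  set P : ℕ → Prop := fun j => ∃ c : ℕ → ℂ, ∃ C : ℝ, 0 ≤ C ∧ ∀ x ∈ Ioo (0:ℝ) 1,
    ‖Qm j u x - ∑ m ∈ Finset.Icc j M, c m * (x:ℂ) ^ m‖ ≤ C * x ^ (M+1) with hP
  have key : ∀ d : ℕ, d ≤ M + 1 → P (M + 1 - d) := by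
    intro d
    induction d with
    | zero =>
        intro _
        obtain ⟨C, hC⟩ := hbound M
        refine ⟨0, max C 0, le_max_right _ _, fun x hx => ?_⟩
        have hIcc : Finset.Icc (M+1-0) M = ∅ := by
          apply Finset.Icc_eq_empty; omega
        rw [hIcc]
        simp only [Finset.sum_empty, sub_zero, Nat.sub_zero, Qm_succ_eq_Qop]
        calc ‖Qop M u x‖ ≤ C * x ^ (M+1) := hC x hx
          _ ≤ max C 0 * x ^ (M+1) := by
              apply mul_le_mul_of_nonneg_right (le_max_left _ _) (pow_nonneg hx.1.le _)
    | succ d ih =>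
        intro hd
        have hdM : d ≤ M := by omega
        obtain ⟨c, C, hC, hIH⟩ := ih (by omega)
        set j := M - d with hj
        have hj1 : M + 1 - d = j + 1 := by omega
        have hj2 : M + 1 - (d + 1) = j := by omega
        rw [hj1] at hIH
        rw [hj2]
        have hjM : j ≤ M := by omega
        set w := Qm j u with hw
        have hwsm := Qm_contDiffOn u hu j
        set W : ℝ → ℂ := fun x => w x - ∑ m ∈ Finset.Icc (j+1) M,
          (c m / ((m:ℂ) - (j:ℂ))) * (x:ℂ) ^ m with hWdef
        set W' : ℝ → ℂ := fun x => deriv w x - ∑ m ∈ Finset.Icc (j+1) M,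
          (c m / ((m:ℂ) - (j:ℂ))) * ((m:ℂ) * (x:ℂ) ^ (m-1)) with hW'def
        have hWd : ∀ x ∈ Ioo (0:ℝ) 1, HasDerivAt W (W' x) x := by
          intro x hx
          have h1 : HasDerivAt w (deriv w x) x := by
            have := (hwsm.differentiableOn (by simp)).differentiableAt (isOpen_Ioo.mem_nhds hx)
            exact this.hasDerivAt
          have h2 : HasDerivAt (fun x : ℝ => ∑ m ∈ Finset.Icc (j+1) M,
              (c m / ((m:ℂ) - (j:ℂ))) * (x:ℂ) ^ m)
              (∑ m ∈ Finset.Icc (j+1) M, (c m / ((m:ℂ) - (j:ℂ))) * ((m:ℂ) * (x:ℂ) ^ (m-1))) x := by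
            apply HasDerivAt.fun_sum
            intro m hm
            exact ((hasDerivAt_pow m ((x:ℂ))).comp_ofReal).const_mul _
          exact h1.sub h2
        have hWb : ∀ x ∈ Ioo (0:ℝ) 1, ‖(x:ℂ) * W' x - (j:ℂ) * W x‖ ≤ C * x ^ (M+1) := by
          intro x hx
          have heq : (x:ℂ) * W' x - (j:ℂ) * W x
              = Qm (j+1) u x - ∑ m ∈ Finset.Icc (j+1) M, c m * (x:ℂ) ^ m := by
            have hQ : Qm (j+1) u x = (x:ℂ) * deriv w x - (j:ℂ) * w x := rfl
            rw [hQ, hWdef, hW'def]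
            simp only [mul_sub, Finset.mul_sum, sub_sub_sub_comm]
            congr 1
            rw [← Finset.sum_sub_distrib]
            apply Finset.sum_congr rfl
            intro m hm
            have hm1 : j + 1 ≤ m := (Finset.mem_Icc.mp hm).1
            have hne : (m:ℂ) - (j:ℂ) ≠ 0 :=
              sub_ne_zero.mpr (by exact_mod_cast (by omega : m ≠ j))
            have hxp : (x:ℂ) * (x:ℂ) ^ (m-1) = (x:ℂ) ^ m := by
              rw [← pow_succ']
              congr 1
              omega
            calc (x:ℂ) * ((c m / ((m:ℂ) - (j:ℂ))) * ((m:ℂ) * (x:ℂ) ^ (m-1)))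
                  - (j:ℂ) * ((c m / ((m:ℂ) - (j:ℂ))) * (x:ℂ) ^ m)
                = (c m / ((m:ℂ) - (j:ℂ))) * ((m:ℂ) - (j:ℂ)) * (x:ℂ) ^ m := by
                  rw [← hxp]; ring
              _ = c m * (x:ℂ) ^ m := by rw [div_mul_cancel₀ _ hne]
          rw [heq]
          exact hIH x hx
        obtain ⟨a, ha⟩ := peel W W' j M hjM C hC hWd hWb
        refine ⟨fun m => if m = j then a else c m / ((m:ℂ) - (j:ℂ)), C, hC, fun x hx => ?_⟩
        have hIns : Finset.Icc j M = insert j (Finset.Icc (j+1) M) := by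
          ext m
          simp only [Finset.mem_Icc, Finset.mem_insert]
          omega
        have hnotmem : j ∉ Finset.Icc (j+1) M := by simp
        rw [hIns, Finset.sum_insert hnotmem]
        simp only [↓reduceIte]
        have hrest : ∑ m ∈ Finset.Icc (j+1) M,
            (if m = j then a else c m / ((m:ℂ) - (j:ℂ))) * (x:ℂ) ^ m
            = ∑ m ∈ Finset.Icc (j+1) M, (c m / ((m:ℂ) - (j:ℂ))) * (x:ℂ) ^ m := by
          apply Finset.sum_congr rfl
          intro m hm
          have : m ≠ j := by have := (Finset.mem_Icc.mp hm).1; omega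
          rw [if_neg this]
        rw [hrest]
        have : Qm j u x - (a * (x:ℂ) ^ j + ∑ m ∈ Finset.Icc (j+1) M,
            (c m / ((m:ℂ) - (j:ℂ))) * (x:ℂ) ^ m) = W x - a * (x:ℂ) ^ j := by
          rw [hWdef]; ring
        rw [this]
        exact ha x hx
  obtain ⟨c, C, _, hfin⟩ := key (M+1) le_rfl
  refine ⟨c, C, fun x hx => ?_⟩
  have h0 : M + 1 - (M + 1) = 0 := by omega
  rw [h0] at hfin
  have : Finset.Icc 0 M = Finset.range (M+1) := by
    ext m; simp
  rw [← this]
  exact hfin x hx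

lemma poly_small : ∀ (p : ℕ) (d : ℕ → ℂ) (C : ℝ),
    (∀ x ∈ Ioo (0:ℝ) 1, ‖∑ m ∈ Finset.range p, d m * (x:ℂ) ^ m‖ ≤ C * x ^ p) →
    ∀ m < p, d m = 0 := by
  intro p
  induction p with
  | zero => intro d C _ m hm; omega
  | succ p ih =>
      intro d C hbd
      have hcont : Continuous (fun x : ℝ => ∑ m ∈ Finset.range (p+1), d m * (x:ℂ) ^ m) := by
        apply continuous_finset_sum
        intro m _
        exact continuous_const.mul ((Complex.continuous_ofReal.pow m))
      have hF0 : (∑ m ∈ Finset.range (p+1), d m * ((0:ℝ):ℂ) ^ m) = d 0 := by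
        rw [Finset.sum_range_succ']
        simp
      have hd0 : d 0 = 0 := by
        have h1 : Tendsto (fun x : ℝ => ‖∑ m ∈ Finset.range (p+1), d m * (x:ℂ) ^ m‖)
            (𝓝[>] (0:ℝ)) (𝓝 ‖d 0‖) := by
          rw [← hF0]
          exact ((hcont.tendsto 0).mono_left nhdsWithin_le_nhds).norm
        have h2 : Tendsto (fun x : ℝ => C * x ^ (p+1)) (𝓝[>] (0:ℝ)) (𝓝 0) := by
          have : Tendsto (fun x : ℝ => C * x ^ (p+1)) (𝓝 0) (𝓝 (C * 0 ^ (p+1))) :=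
            (continuous_const.mul (continuous_pow (p+1))).tendsto 0
          simpa [zero_pow] using this.mono_left nhdsWithin_le_nhds
        have h3 : ‖d 0‖ ≤ 0 := by
          apply le_of_tendsto_of_tendsto h1 h2
          filter_upwards [Ioo_mem_nhdsGT_of_mem (Set.mem_Ico.mpr ⟨le_refl (0:ℝ), zero_lt_one⟩)]
            with x hx
          exact hbd x hx
        simpa using le_antisymm h3 (norm_nonneg _)
      have hshift : ∀ x ∈ Ioo (0:ℝ) 1,
          ‖∑ m ∈ Finset.range p, d (m+1) * (x:ℂ) ^ m‖ ≤ C * x ^ p := by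
        intro x hx
        have hx0 : (0:ℝ) < x := hx.1
        have hxC : (x:ℂ) ≠ 0 := by
          simp only [ne_eq, Complex.ofReal_eq_zero]; exact ne_of_gt hx0
        have hmul : (x:ℂ) * ∑ m ∈ Finset.range p, d (m+1) * (x:ℂ) ^ m
            = ∑ m ∈ Finset.range (p+1), d m * (x:ℂ) ^ m := by
          rw [Finset.sum_range_succ', hd0, Finset.mul_sum]
          simp only [zero_mul, pow_zero, mul_one, add_zero]
          apply Finset.sum_congr rfl
          intro m _
          rw [pow_succ']
          ring
        have := hbd x hx
        rw [← hmul, norm_mul] at this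
        have hnx : ‖(x:ℂ)‖ = x := by rw [Complex.norm_real, Real.norm_of_nonneg hx0.le]
        rw [hnx] at this
        have hxp : C * x ^ (p+1) = (C * x ^ p) * x := by ring
        rw [hxp] at this
        rw [mul_comm] at this
        exact le_of_mul_le_mul_right this hx0
      intro m hm
      match m with
      | 0 => exact hd0
      | (k+1) => exact ih (fun n => d (n+1)) C hshift k (by omega)

lemma Ioo_to_Ioc (g : ℝ → ℂ) (hg : ContinuousWithinAt g (Ioo (0:ℝ) 1) 1) (C : ℝ) (p : ℕ)
    (h : ∀ x ∈ Ioo (0:ℝ) 1, ‖g x‖ ≤ C * x ^ p) :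
    ∀ x ∈ Ioc (0:ℝ) 1, ‖g x‖ ≤ C * x ^ p := by
  intro x hx
  rcases eq_or_lt_of_le hx.2 with heq | hlt
  swap
  · exact h x ⟨hx.1, hlt⟩
  subst heq
  have hne : (𝓝[Ioo (0:ℝ) 1] 1).NeBot := by
    rw [← mem_closure_iff_nhdsWithin_neBot, closure_Ioo (by norm_num : (0:ℝ) ≠ 1)]
    exact ⟨zero_le_one, le_refl _⟩
  have h1 : Tendsto (fun t => ‖g t‖) (𝓝[Ioo (0:ℝ) 1] 1) (𝓝 ‖g 1‖) := hg.norm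
  have h2 : Tendsto (fun t : ℝ => C * t ^ p) (𝓝[Ioo (0:ℝ) 1] 1) (𝓝 (C * 1 ^ p)) := by
    exact ((continuous_const.mul (continuous_pow p)).tendsto 1).mono_left nhdsWithin_le_nhds
  apply le_of_tendsto_of_tendsto h1 h2
  filter_upwards [self_mem_nhdsWithin] with t ht
  exact h t ht

/-- If a smooth function `u` on `(0,1]` satisfies, for every `M`,
`|∏_{j=0}^{M} (x∂ₓ − j) u| ≤ C_M x^(M+1)`, then `u` has a full asymptotic expansion
`u(x) ~ Σ a_m x^m` as `x → 0⁺`. -/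
theorem stmt17 (k : ℕ) (hk : 1 ≤ k) (u : ℝ → ℂ)
    (hu : ContDiffOn ℝ (⊤ : ℕ∞) u (Set.Ioc 0 1))
    (hbound : ∀ M : ℕ, ∃ C : ℝ, ∀ x ∈ Set.Ioc (0 : ℝ) 1, ‖Qop M u x‖ ≤ C * x ^ (M + 1)) :
    ∃ a : ℕ → ℂ, ∀ p : ℕ, ∃ C : ℝ, ∀ x ∈ Set.Ioc (0 : ℝ) 1,
      ‖u x - ∑ m ∈ Finset.range p, a m * (x : ℂ) ^ m‖ ≤ C * x ^ p := by
  have hu' : ContDiffOn ℝ (⊤ : ℕ∞) u (Ioo 0 1) := hu.mono Ioo_subset_Ioc_self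
  have hbound' : ∀ M : ℕ, ∃ C : ℝ, ∀ x ∈ Ioo (0:ℝ) 1, ‖Qop M u x‖ ≤ C * x ^ (M + 1) := by
    intro M
    obtain ⟨C, hC⟩ := hbound M
    exact ⟨C, fun x hx => hC x (Ioo_subset_Ioc_self hx)⟩
  have hT : ∀ p : ℕ, ∃ c : ℕ → ℂ, ∃ C : ℝ, 0 ≤ C ∧ ∀ x ∈ Ioc (0:ℝ) 1,
      ‖u x - ∑ m ∈ Finset.range p, c m * (x:ℂ) ^ m‖ ≤ C * x ^ p := by
    intro p
    obtain ⟨c, C, hc⟩ := main_expand u hu' hbound' p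
    have h2 : ∀ x ∈ Ioo (0:ℝ) 1, ‖u x - ∑ m ∈ Finset.range p, c m * (x:ℂ) ^ m‖
        ≤ (max C 0 + ‖c p‖) * x ^ p := by
      intro x hx
      have hxp : x ^ (p+1) ≤ x ^ p := pow_le_pow_of_le_one hx.1.le hx.2.le (by omega)
      have hb := hc x hx
      have hsplit : u x - ∑ m ∈ Finset.range p, c m * (x:ℂ) ^ m
          = (u x - ∑ m ∈ Finset.range (p+1), c m * (x:ℂ) ^ m) + c p * (x:ℂ) ^ p := by
        rw [Finset.sum_range_succ]; ring
      rw [hsplit]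
      have hnp : ‖c p * (x:ℂ) ^ p‖ = ‖c p‖ * x ^ p := by
        rw [norm_mul, norm_pow, Complex.norm_real, Real.norm_of_nonneg hx.1.le]
      calc ‖(u x - ∑ m ∈ Finset.range (p+1), c m * (x:ℂ) ^ m) + c p * (x:ℂ) ^ p‖
          ≤ ‖u x - ∑ m ∈ Finset.range (p+1), c m * (x:ℂ) ^ m‖ + ‖c p * (x:ℂ) ^ p‖ :=
            norm_add_le _ _
        _ ≤ C * x ^ (p+1) + ‖c p‖ * x ^ p := by rw [hnp]; exact add_le_add hb (le_refl _)
        _ ≤ max C 0 * x ^ p + ‖c p‖ * x ^ p := by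
            apply add_le_add _ (le_refl _)
            calc C * x ^ (p+1) ≤ max C 0 * x ^ (p+1) :=
                  mul_le_mul_of_nonneg_right (le_max_left _ _) (pow_nonneg hx.1.le _)
              _ ≤ max C 0 * x ^ p :=
                  mul_le_mul_of_nonneg_left hxp (le_max_right _ _)
        _ = (max C 0 + ‖c p‖) * x ^ p := by ring
    have hcw : ContinuousWithinAt
        (fun x : ℝ => u x - ∑ m ∈ Finset.range p, c m * (x:ℂ) ^ m) (Ioo 0 1) 1 := by
      apply ContinuousWithinAt.sub
      · exact ((hu.continuousOn) 1 (by norm_num : (1:ℝ) ∈ Ioc 0 1)).mono Ioo_subset_Ioc_self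
      · exact (continuous_finset_sum _ fun m _ =>
          continuous_const.mul (Complex.continuous_ofReal.pow m)).continuousWithinAt
    exact ⟨c, max C 0 + ‖c p‖, by positivity, Ioo_to_Ioc _ hcw _ p h2⟩
  choose c C hC0 hc using hT
  have hcoh : ∀ q p : ℕ, q ≤ p → ∀ m < q, c q m = c p m := by
    intro q p hqp
    have hz : ∀ m < q, (c q m - c p m) = 0 := by
      apply poly_small q (fun i => c q i - c p i)
        (C p + C q + ∑ i ∈ Finset.Ico q p, ‖c p i‖)
      intro x hx
      have hA := hc p x (Ioo_subset_Ioc_self hx)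
      have hB := hc q x (Ioo_subset_Ioc_self hx)
      have hsplit : ∑ i ∈ Finset.range q, (c q i - c p i) * (x:ℂ) ^ i
          = (u x - ∑ i ∈ Finset.range p, c p i * (x:ℂ) ^ i)
            + ∑ i ∈ Finset.Ico q p, c p i * (x:ℂ) ^ i
            - (u x - ∑ i ∈ Finset.range q, c q i * (x:ℂ) ^ i) := by
        rw [Finset.sum_Ico_eq_sub _ hqp]
        simp only [sub_mul]
        rw [Finset.sum_sub_distrib]
        ring
      rw [hsplit]
      have hTail : ‖∑ i ∈ Finset.Ico q p, c p i * (x:ℂ) ^ i‖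
          ≤ (∑ i ∈ Finset.Ico q p, ‖c p i‖) * x ^ q := by
        calc ‖∑ i ∈ Finset.Ico q p, c p i * (x:ℂ) ^ i‖
            ≤ ∑ i ∈ Finset.Ico q p, ‖c p i * (x:ℂ) ^ i‖ := norm_sum_le _ _
          _ ≤ ∑ i ∈ Finset.Ico q p, ‖c p i‖ * x ^ q := by
              apply Finset.sum_le_sum
              intro i hi
              have hiq : q ≤ i := (Finset.mem_Ico.mp hi).1
              rw [norm_mul, norm_pow, Complex.norm_real, Real.norm_of_nonneg hx.1.le]
              exact mul_le_mul_of_nonneg_left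
                (pow_le_pow_of_le_one hx.1.le hx.2.le hiq) (norm_nonneg _)
          _ = (∑ i ∈ Finset.Ico q p, ‖c p i‖) * x ^ q := (Finset.sum_mul _ _ _).symm
      have hxpq : x ^ p ≤ x ^ q := pow_le_pow_of_le_one hx.1.le hx.2.le hqp
      calc ‖(u x - ∑ i ∈ Finset.range p, c p i * (x:ℂ) ^ i)
            + ∑ i ∈ Finset.Ico q p, c p i * (x:ℂ) ^ i
            - (u x - ∑ i ∈ Finset.range q, c q i * (x:ℂ) ^ i)‖
          ≤ ‖(u x - ∑ i ∈ Finset.range p, c p i * (x:ℂ) ^ i)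
            + ∑ i ∈ Finset.Ico q p, c p i * (x:ℂ) ^ i‖
            + ‖u x - ∑ i ∈ Finset.range q, c q i * (x:ℂ) ^ i‖ := norm_sub_le _ _
        _ ≤ ‖u x - ∑ i ∈ Finset.range p, c p i * (x:ℂ) ^ i‖
            + ‖∑ i ∈ Finset.Ico q p, c p i * (x:ℂ) ^ i‖
            + ‖u x - ∑ i ∈ Finset.range q, c q i * (x:ℂ) ^ i‖ := by
              apply add_le_add _ (le_refl _)
              exact norm_add_le _ _
        _ ≤ C p * x ^ p + (∑ i ∈ Finset.Ico q p, ‖c p i‖) * x ^ q + C q * x ^ q := by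
              apply add_le_add (add_le_add hA hTail) hB
        _ ≤ (C p + C q + ∑ i ∈ Finset.Ico q p, ‖c p i‖) * x ^ q := by
              have h1 : C p * x ^ p ≤ C p * x ^ q :=
                mul_le_mul_of_nonneg_left hxpq (hC0 p)
              nlinarith [pow_nonneg hx.1.le q]
    intro m hm
    have := hz m hm
    linear_combination this
  refine ⟨fun m => c (m+1) m, fun p => ⟨C p, fun x hx => ?_⟩⟩
  have hsum : ∑ m ∈ Finset.range p, c (m+1) m * (x:ℂ) ^ m
      = ∑ m ∈ Finset.range p, c p m * (x:ℂ) ^ m := by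
    apply Finset.sum_congr rfl
    intro m hm
    have hm' := Finset.mem_range.mp hm
    rw [hcoh (m+1) p (by omega) m (by omega)]
  rw [hsum]
  exact hc p x hx
end
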